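/- Every CL10°-formula is provable in exactly one of CL10° and its dual CL10°-bar (provability in the two systems partitions the set of CL10°-formulas). -/
import Mathlib


/-- CL10-formulas: elementary-base CL9-formulas (no general atoms), with
binary parallel (∧,∨), choice (⊓,⊔) and sequential (△,▽) connectives;
negation is pushed to atoms (`elit b i` is the atom `i` when `b = true`,
its negation when `b = false`). -/
inductive Fml10 where
  | top : Fml10
  | bot : Fml10
  | elit : Bool → ℕ → Fml10
  | pand : Fml10 → Fml10 → Fml10
  | por  : Fml10 → Fml10 → Fml10
  | cand : Fml10 → Fml10 → Fml10
  | cor  : Fml10 → Fml10 → Fml10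
  | sand : Fml10 → Fml10 → Fml10
  | sor  : Fml10 → Fml10 → Fml10
deriving DecidableEq

namespace Fml10

/-- Surface replacement of one occurrence of `G` by `G'` (not in the scope of
a choice connective, not in the tail of a sequential subformula). -/
inductive SRepl (G G' : Fml10) : Fml10 → Fml10 → Prop where
  | here : SRepl G G' G G'
  | pandL {A A' B} : SRepl G G' A A' → SRepl G G' (pand A B) (pand A' B)
  | pandR {A B B'} : SRepl G G' B B' → SRepl G G' (pand A B) (pand A B')
  | porL {A A' B} : SRepl G G' A A' → SRepl G G' (por A B) (por A' B)
  | porR {A B B'} : SRepl G G' B B' → SRepl G G' (por A B) (por A B')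
  | sandL {A A' B} : SRepl G G' A A' → SRepl G G' (sand A B) (sand A' B)
  | sorL {A A' B} : SRepl G G' A A' → SRepl G G' (sor A B) (sor A' B)

/-- Classical evaluation of the elementarization: sequential subformulas
contribute their head, surface ⊓-subformulas are ⊤, surface ⊔-subformulas
are ⊥. -/
def eval (v : ℕ → Bool) : Fml10 → Bool
  | top => true
  | bot => false
  | elit b i => if b then v i else !(v i)
  | pand A B => eval v A && eval v B
  | por A B => eval v A || eval v B
  | cand _ _ => true
  | cor _ _ => false
  | sand A _ => eval v A
  | sor A _ => eval v A

/-- Stability: the elementarization is a classical tautology. -/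
def Stable (F : Fml10) : Prop := ∀ v : ℕ → Bool, eval v F = true

end Fml10

open Fml10

/-- The proof system CL10 (the elementary-base fragment of CL9: the rules
Wait, Choose and Switch). -/
inductive CL10 : Fml10 → Prop where
  | wait (F : Fml10) (hst : Stable F)
      (hcand₁ : ∀ A B H, SRepl (cand A B) A F H → CL10 H)
      (hcand₂ : ∀ A B H, SRepl (cand A B) B F H → CL10 H)
      (hsand : ∀ A B H, SRepl (sand A B) B F H → CL10 H) :
      CL10 F
  | choose {F H : Fml10} (A B : Fml10)
      (h : SRepl (cor A B) A F H ∨ SRepl (cor A B) B F H)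
      (hp : CL10 H) : CL10 F
  | switch {F H : Fml10} (A B : Fml10)
      (h : SRepl (sor A B) B F H)
      (hp : CL10 H) : CL10 F

/-- CL10°-formulas: CL10-formulas in which every sequential subformula
carries an underline mark: in `sand u A B` (resp. `sor u A B`) the underline
is on the head `A` when `u = false`, and within the tail `B` when
`u = true`. -/
inductive HFml where
  | top : HFml
  | bot : HFml
  | elit : Bool → ℕ → HFml
  | pand : HFml → HFml → HFml
  | por  : HFml → HFml → HFml
  | cand : HFml → HFml → HFml
  | cor  : HFml → HFml → HFml
  | sand : Bool → HFml → HFml → HFml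
  | sor  : Bool → HFml → HFml → HFml
deriving DecidableEq

namespace HFml

/-- Replacement of one active surface occurrence of `G` by `G'`: the
occurrence is not in the scope of a choice connective and, whenever it lies
within a component of a sequential subformula, that component is the
underlined one. -/
inductive HRepl (G G' : HFml) : HFml → HFml → Prop where
  | here : HRepl G G' G G'
  | pandL {A A' B} : HRepl G G' A A' → HRepl G G' (pand A B) (pand A' B)
  | pandR {A B B'} : HRepl G G' B B' → HRepl G G' (pand A B) (pand A B')
  | porL {A A' B} : HRepl G G' A A' → HRepl G G' (por A B) (por A' B)
  | porR {A B B'} : HRepl G G' B B' → HRepl G G' (por A B) (por A B')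
  | sandHead {A A' B} : HRepl G G' A A' → HRepl G G' (sand false A B) (sand false A' B)
  | sandTail {A B B'} : HRepl G G' B B' → HRepl G G' (sand true A B) (sand true A B')
  | sorHead {A A' B} : HRepl G G' A A' → HRepl G G' (sor false A B) (sor false A' B)
  | sorTail {A B B'} : HRepl G G' B B' → HRepl G G' (sor true A B) (sor true A B')

/-- Classical evaluation of the elementarization of a CL10°-formula: each
sequential subformula contributes its underlined component, surface ⊓ is ⊤,
surface ⊔ is ⊥. -/
def eval (v : ℕ → Bool) : HFml → Bool
  | top => true
  | bot => false
  | elit b i => if b then v i else !(v i)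
  | pand A B => eval v A && eval v B
  | por A B => eval v A || eval v B
  | cand _ _ => true
  | cor _ _ => false
  | sand u A B => if u then eval v B else eval v A
  | sor u A B => if u then eval v B else eval v A

/-- Stability of a CL10°-formula. -/
def Stable (F : HFml) : Prop := ∀ v : ℕ → Bool, eval v F = true

end HFml

open HFml

/-- The proof system CL10°: Wait° (stable conclusion; premises replace active
surface ⊓-subformulas by each conjunct and advance the underline in active
surface △-subformulas), Choose° (pick a disjunct of an active surface
⊔-subformula) and Switch° (advance the underline in an active surface
▽-subformula). -/
inductive CL10h : HFml → Prop where
  | wait (F : HFml) (hst : HFml.Stable F)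
      (hcand₁ : ∀ A B H, HRepl (HFml.cand A B) A F H → CL10h H)
      (hcand₂ : ∀ A B H, HRepl (HFml.cand A B) B F H → CL10h H)
      (hsand : ∀ A B H, HRepl (HFml.sand false A B) (HFml.sand true A B) F H → CL10h H) :
      CL10h F
  | choose {F H : HFml} (A B : HFml)
      (h : HRepl (HFml.cor A B) A F H ∨ HRepl (HFml.cor A B) B F H)
      (hp : CL10h H) : CL10h F
  | switch {F H : HFml} (A B : HFml)
      (h : HRepl (HFml.sor false A B) (HFml.sor true A B) F H)
      (hp : CL10h H) : CL10h F

/-- The dual proof system CL10°-bar: Wait°-bar (instable conclusion; premises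
replace active surface ⊔-subformulas by each disjunct and advance the
underline in active surface ▽-subformulas), Choose°-bar (pick a conjunct of
an active surface ⊓-subformula) and Switch°-bar (advance the underline in an
active surface △-subformula). -/
inductive CL10hbar : HFml → Prop where
  | wait (F : HFml) (hst : ¬ HFml.Stable F)
      (hcor₁ : ∀ A B H, HRepl (HFml.cor A B) A F H → CL10hbar H)
      (hcor₂ : ∀ A B H, HRepl (HFml.cor A B) B F H → CL10hbar H)
      (hsor : ∀ A B H, HRepl (HFml.sor false A B) (HFml.sor true A B) F H → CL10hbar H) :
      CL10hbar F
  | choose {F H : HFml} (A B : HFml)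
      (h : HRepl (HFml.cand A B) A F H ∨ HRepl (HFml.cand A B) B F H)
      (hp : CL10hbar H) : CL10hbar F
  | switch {F H : HFml} (A B : HFml)
      (h : HRepl (HFml.sand false A B) (HFml.sand true A B) F H)
      (hp : CL10hbar H) : CL10hbar F

/-- Reading a CL10-formula as a CL10°-formula by underlining the head of
every sequential subformula. -/
def embed : Fml10 → HFml
  | Fml10.top => HFml.top
  | Fml10.bot => HFml.bot
  | Fml10.elit b i => HFml.elit b i
  | Fml10.pand A B => HFml.pand (embed A) (embed B)
  | Fml10.por A B => HFml.por (embed A) (embed B)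
  | Fml10.cand A B => HFml.cand (embed A) (embed B)
  | Fml10.cor A B => HFml.cor (embed A) (embed B)
  | Fml10.sand A B => HFml.sand false (embed A) (embed B)
  | Fml10.sor A B => HFml.sor false (embed A) (embed B)

/-! ### Auxiliary development for stmt14 -/

/-- Measure on CL10°-formulas, decreasing along game moves. -/
def hmu : HFml → ℕ
  | .top => 0
  | .bot => 0
  | .elit _ _ => 0
  | .pand A B => hmu A + hmu B
  | .por A B => hmu A + hmu B
  | .cand A B => hmu A + hmu B + 1
  | .cor A B => hmu A + hmu B + 1
  | .sand u A B => if u then hmu B else hmu A + hmu B + 1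
  | .sor u A B => if u then hmu B else hmu A + hmu B + 1

/-- Equivalence of CL10°-formulas up to the (dead) heads of already-switched
sequential subformulas. -/
inductive HEqv : HFml → HFml → Prop where
  | top : HEqv .top .top
  | bot : HEqv .bot .bot
  | elit (b i) : HEqv (.elit b i) (.elit b i)
  | pand {A A' B B'} : HEqv A A' → HEqv B B' → HEqv (.pand A B) (.pand A' B')
  | por {A A' B B'} : HEqv A A' → HEqv B B' → HEqv (.por A B) (.por A' B')
  | cand {A A' B B'} : HEqv A A' → HEqv B B' → HEqv (.cand A B) (.cand A' B')
  | cor {A A' B B'} : HEqv A A' → HEqv B B' → HEqv (.cor A B) (.cor A' B')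
  | sandF {A A' B B'} : HEqv A A' → HEqv B B' → HEqv (.sand false A B) (.sand false A' B')
  | sandT (A A') {B B'} : HEqv B B' → HEqv (.sand true A B) (.sand true A' B')
  | sorF {A A' B B'} : HEqv A A' → HEqv B B' → HEqv (.sor false A B) (.sor false A' B')
  | sorT (A A') {B B'} : HEqv B B' → HEqv (.sor true A B) (.sor true A' B')

theorem HEqv.refl : ∀ F, HEqv F F
  | .top => .top
  | .bot => .bot
  | .elit b i => .elit b i
  | .pand A B => .pand (HEqv.refl A) (HEqv.refl B)
  | .por A B => .por (HEqv.refl A) (HEqv.refl B)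
  | .cand A B => .cand (HEqv.refl A) (HEqv.refl B)
  | .cor A B => .cor (HEqv.refl A) (HEqv.refl B)
  | .sand false A B => .sandF (HEqv.refl A) (HEqv.refl B)
  | .sand true A B => .sandT A A (HEqv.refl B)
  | .sor false A B => .sorF (HEqv.refl A) (HEqv.refl B)
  | .sor true A B => .sorT A A (HEqv.refl B)

theorem HEqv.symm {F F' : HFml} (h : HEqv F F') : HEqv F' F := by
  induction h with
  | top => exact .top
  | bot => exact .bot
  | elit b i => exact .elit b i
  | pand _ _ ih1 ih2 => exact .pand ih1 ih2
  | por _ _ ih1 ih2 => exact .por ih1 ih2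
  | cand _ _ ih1 ih2 => exact .cand ih1 ih2
  | cor _ _ ih1 ih2 => exact .cor ih1 ih2
  | sandF _ _ ih1 ih2 => exact .sandF ih1 ih2
  | sandT A A' _ ih => exact .sandT A' A ih
  | sorF _ _ ih1 ih2 => exact .sorF ih1 ih2
  | sorT A A' _ ih => exact .sorT A' A ih

theorem HEqv.eval_eq {F F' : HFml} (h : HEqv F F') (v : ℕ → Bool) :
    HFml.eval v F = HFml.eval v F' := by
  induction h with
  | top => rfl
  | bot => rfl
  | elit b i => rfl
  | pand _ _ ih1 ih2 => simp [HFml.eval, ih1, ih2]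
  | por _ _ ih1 ih2 => simp [HFml.eval, ih1, ih2]
  | cand _ _ _ _ => rfl
  | cor _ _ _ _ => rfl
  | sandF _ _ ih1 ih2 => simp [HFml.eval, ih1, ih2]
  | sandT A A' _ ih => simp [HFml.eval, ih]
  | sorF _ _ ih1 ih2 => simp [HFml.eval, ih1, ih2]
  | sorT A A' _ ih => simp [HFml.eval, ih]

theorem HEqv.stable_iff {F F' : HFml} (h : HEqv F F') :
    HFml.Stable F ↔ HFml.Stable F' := by
  unfold HFml.Stable
  constructor <;> intro hs v
  · rw [← h.eval_eq v]; exact hs v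
  · rw [h.eval_eq v]; exact hs v

/-- Kinds of game moves. -/
inductive MKind where
  | c1 | c2 | d1 | d2 | sa | so
deriving DecidableEq

/-- The root shape of a move of a given kind. -/
def Shape : MKind → HFml → HFml → Prop
  | .c1, G, G' => ∃ A B, G = HFml.cand A B ∧ G' = A
  | .c2, G, G' => ∃ A B, G = HFml.cand A B ∧ G' = B
  | .d1, G, G' => ∃ A B, G = HFml.cor A B ∧ G' = A
  | .d2, G, G' => ∃ A B, G = HFml.cor A B ∧ G' = B
  | .sa, G, G' => ∃ A B, G = HFml.sand false A B ∧ G' = HFml.sand true A B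
  | .so, G, G' => ∃ A B, G = HFml.sor false A B ∧ G' = HFml.sor true A B

/-- A move of kind `k` from `F` to `H`. -/
def Mov (k : MKind) (F H : HFml) : Prop :=
  ∃ G G', Shape k G G' ∧ HRepl G G' F H

def kTag : MKind → ℕ
  | .c1 => 0 | .c2 => 0 | .d1 => 1 | .d2 => 1 | .sa => 2 | .so => 3

def hTag : HFml → ℕ
  | .cand _ _ => 0
  | .cor _ _ => 1
  | .sand false _ _ => 2
  | .sor false _ _ => 3
  | _ => 4

theorem Shape.tag {k G G'} (h : Shape k G G') : hTag G = kTag k := by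
  cases k <;> obtain ⟨A, B, rfl, rfl⟩ := h <;> rfl

theorem hmu_hrepl {G G' F H : HFml} (h : HRepl G G' F H) :
    hmu H + hmu G = hmu F + hmu G' := by
  induction h <;> first | omega | (simp [hmu]; omega)

theorem Shape.mu_lt {k G G'} (h : Shape k G G') : hmu G' < hmu G := by
  cases k <;> obtain ⟨A, B, rfl, rfl⟩ := h <;> simp [hmu] <;> omega

theorem Mov.mu_lt {k F H} (h : Mov k F H) : hmu H < hmu F := by
  obtain ⟨G, G', hs, hr⟩ := h
  have h1 := hmu_hrepl hr
  have h2 := hs.mu_lt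
  omega

/-- Transfer of a shape across `HEqv`. -/
theorem Shape.transfer {k G G' G₂} (hs : Shape k G G') (he : HEqv G G₂) :
    ∃ G₂', Shape k G₂ G₂' ∧ HEqv G' G₂' := by
  cases k
  case c1 =>
    obtain ⟨A, B, rfl, rfl⟩ := hs
    cases he with
    | cand h1 h2 => exact ⟨_, ⟨_, _, rfl, rfl⟩, h1⟩
  case c2 =>
    obtain ⟨A, B, rfl, rfl⟩ := hs
    cases he with
    | cand h1 h2 => exact ⟨_, ⟨_, _, rfl, rfl⟩, h2⟩
  case d1 =>
    obtain ⟨A, B, rfl, rfl⟩ := hs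
    cases he with
    | cor h1 h2 => exact ⟨_, ⟨_, _, rfl, rfl⟩, h1⟩
  case d2 =>
    obtain ⟨A, B, rfl, rfl⟩ := hs
    cases he with
    | cor h1 h2 => exact ⟨_, ⟨_, _, rfl, rfl⟩, h2⟩
  case sa =>
    obtain ⟨A, B, rfl, rfl⟩ := hs
    cases he with
    | sandF h1 h2 => exact ⟨_, ⟨_, _, rfl, rfl⟩, .sandT _ _ h2⟩
  case so =>
    obtain ⟨A, B, rfl, rfl⟩ := hs
    cases he with
    | sorF h1 h2 => exact ⟨_, ⟨_, _, rfl, rfl⟩, .sorT _ _ h2⟩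

/-- Transfer of a move across `HEqv`. -/
theorem hrepl_transfer {G G' F H F' : HFml} {k : MKind}
    (hr : HRepl G G' F H) (hs : Shape k G G') (he : HEqv F F') :
    ∃ H', Mov k F' H' ∧ HEqv H H' := by
  induction hr generalizing F' with
  | here =>
    obtain ⟨G₂', hs', he'⟩ := hs.transfer he
    exact ⟨G₂', ⟨_, _, hs', .here⟩, he'⟩
  | pandL _ ih =>
    cases he with
    | pand h1 h2 =>
      obtain ⟨H', ⟨G₂, G₂', hs', hr'⟩, he'⟩ := ih h1
      exact ⟨_, ⟨G₂, G₂', hs', .pandL hr'⟩, .pand he' h2⟩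
  | pandR _ ih =>
    cases he with
    | pand h1 h2 =>
      obtain ⟨H', ⟨G₂, G₂', hs', hr'⟩, he'⟩ := ih h2
      exact ⟨_, ⟨G₂, G₂', hs', .pandR hr'⟩, .pand h1 he'⟩
  | porL _ ih =>
    cases he with
    | por h1 h2 =>
      obtain ⟨H', ⟨G₂, G₂', hs', hr'⟩, he'⟩ := ih h1
      exact ⟨_, ⟨G₂, G₂', hs', .porL hr'⟩, .por he' h2⟩
  | porR _ ih =>
    cases he with
    | por h1 h2 =>
      obtain ⟨H', ⟨G₂, G₂', hs', hr'⟩, he'⟩ := ih h2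
      exact ⟨_, ⟨G₂, G₂', hs', .porR hr'⟩, .por h1 he'⟩
  | sandHead _ ih =>
    cases he with
    | sandF h1 h2 =>
      obtain ⟨H', ⟨G₂, G₂', hs', hr'⟩, he'⟩ := ih h1
      exact ⟨_, ⟨G₂, G₂', hs', .sandHead hr'⟩, .sandF he' h2⟩
  | sandTail _ ih =>
    cases he with
    | @sandT _ A' _ B' h2 =>
      obtain ⟨H', ⟨G₂, G₂', hs', hr'⟩, he'⟩ := ih h2
      exact ⟨_, ⟨G₂, G₂', hs', .sandTail hr'⟩, .sandT _ _ he'⟩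
  | sorHead _ ih =>
    cases he with
    | sorF h1 h2 =>
      obtain ⟨H', ⟨G₂, G₂', hs', hr'⟩, he'⟩ := ih h1
      exact ⟨_, ⟨G₂, G₂', hs', .sorHead hr'⟩, .sorF he' h2⟩
  | sorTail _ ih =>
    cases he with
    | @sorT _ A' _ B' h2 =>
      obtain ⟨H', ⟨G₂, G₂', hs', hr'⟩, he'⟩ := ih h2
      exact ⟨_, ⟨G₂, G₂', hs', .sorTail hr'⟩, .sorT _ _ he'⟩

/-- Building provability from a move. -/
theorem CL10h.of_mov_d1 {F H} (hm : Mov .d1 F H) (hp : CL10h H) : CL10h F := by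
  obtain ⟨G, G', ⟨A, B, rfl, rfl⟩, hr⟩ := hm
  exact CL10h.choose _ _ (Or.inl hr) hp

theorem CL10h.of_mov_d2 {F H} (hm : Mov .d2 F H) (hp : CL10h H) : CL10h F := by
  obtain ⟨G, G', ⟨A, B, rfl, rfl⟩, hr⟩ := hm
  exact CL10h.choose _ _ (Or.inr hr) hp

theorem CL10h.of_mov_so {F H} (hm : Mov .so F H) (hp : CL10h H) : CL10h F := by
  obtain ⟨G, G', ⟨A, B, rfl, rfl⟩, hr⟩ := hm
  exact CL10h.switch _ _ hr hp

theorem CL10hbar.of_mov_c1 {F H} (hm : Mov .c1 F H) (hp : CL10hbar H) : CL10hbar F := by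
  obtain ⟨G, G', ⟨A, B, rfl, rfl⟩, hr⟩ := hm
  exact CL10hbar.choose _ _ (Or.inl hr) hp

theorem CL10hbar.of_mov_c2 {F H} (hm : Mov .c2 F H) (hp : CL10hbar H) : CL10hbar F := by
  obtain ⟨G, G', ⟨A, B, rfl, rfl⟩, hr⟩ := hm
  exact CL10hbar.choose _ _ (Or.inr hr) hp

theorem CL10hbar.of_mov_sa {F H} (hm : Mov .sa F H) (hp : CL10hbar H) : CL10hbar F := by
  obtain ⟨G, G', ⟨A, B, rfl, rfl⟩, hr⟩ := hm
  exact CL10hbar.switch _ _ hr hp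

/-- CL10° provability is invariant under `HEqv`. -/
theorem CL10h.eqv {F : HFml} (h : CL10h F) : ∀ {F'}, HEqv F F' → CL10h F' := by
  induction h with
  | wait F hst hc1 hc2 hsa ih1 ih2 ih3 =>
    intro F' he
    refine CL10h.wait F' ((he.stable_iff).mp hst) ?_ ?_ ?_
    · intro A B H' hr
      obtain ⟨H, ⟨G, G', ⟨A₀, B₀, rfl, rfl⟩, hr₀⟩, he'⟩ :=
        hrepl_transfer (k := .c1) hr ⟨A, B, rfl, rfl⟩ he.symm
      exact ih1 _ _ H hr₀ he'.symm
    · intro A B H' hr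
      obtain ⟨H, ⟨G, G', ⟨A₀, B₀, rfl, rfl⟩, hr₀⟩, he'⟩ :=
        hrepl_transfer (k := .c2) hr ⟨A, B, rfl, rfl⟩ he.symm
      exact ih2 _ _ H hr₀ he'.symm
    · intro A B H' hr
      obtain ⟨H, ⟨G, G', ⟨A₀, B₀, rfl, rfl⟩, hr₀⟩, he'⟩ :=
        hrepl_transfer (k := .sa) hr ⟨A, B, rfl, rfl⟩ he.symm
      exact ih3 _ _ H hr₀ he'.symm
  | choose A B h hp ih =>
    intro F' he
    rcases h with hr | hr
    · obtain ⟨H', hm', he'⟩ := hrepl_transfer (k := .d1) hr ⟨A, B, rfl, rfl⟩ he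
      exact CL10h.of_mov_d1 hm' (ih he')
    · obtain ⟨H', hm', he'⟩ := hrepl_transfer (k := .d2) hr ⟨A, B, rfl, rfl⟩ he
      exact CL10h.of_mov_d2 hm' (ih he')
  | switch A B h hp ih =>
    intro F' he
    obtain ⟨H', hm', he'⟩ := hrepl_transfer (k := .so) h ⟨A, B, rfl, rfl⟩ he
    exact CL10h.of_mov_so hm' (ih he')

/-- The commutation trichotomy between two moves from a common position. -/
def Tri (k1 k2 : MKind) (H1 H2 : HFml) : Prop :=
  (∃ K K', Mov k2 H1 K ∧ Mov k1 H2 K' ∧ HEqv K K') ∨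
  (∃ K', Mov k1 H2 K' ∧ HEqv H1 K') ∨
  (∃ K, Mov k2 H1 K ∧ HEqv H2 K)

theorem Tri.lift {k1 k2 X Y} (f : HFml → HFml)
    (hm : ∀ k X Y, Mov k X Y → Mov k (f X) (f Y))
    (he : ∀ X Y, HEqv X Y → HEqv (f X) (f Y))
    (h : Tri k1 k2 X Y) : Tri k1 k2 (f X) (f Y) := by
  rcases h with ⟨K, K', m2, m1, e⟩ | ⟨K', m1, e⟩ | ⟨K, m2, e⟩
  · exact Or.inl ⟨f K, f K', hm _ _ _ m2, hm _ _ _ m1, he _ _ e⟩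
  · exact Or.inr (Or.inl ⟨f K', hm _ _ _ m1, he _ _ e⟩)
  · exact Or.inr (Or.inr ⟨f K, hm _ _ _ m2, he _ _ e⟩)

theorem Mov.pandL {k X Y B} (h : Mov k X Y) : Mov k (.pand X B) (.pand Y B) := by
  obtain ⟨G, G', hs, hr⟩ := h; exact ⟨G, G', hs, .pandL hr⟩
theorem Mov.pandR {k X Y A} (h : Mov k X Y) : Mov k (.pand A X) (.pand A Y) := by
  obtain ⟨G, G', hs, hr⟩ := h; exact ⟨G, G', hs, .pandR hr⟩
theorem Mov.porL {k X Y B} (h : Mov k X Y) : Mov k (.por X B) (.por Y B) := by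
  obtain ⟨G, G', hs, hr⟩ := h; exact ⟨G, G', hs, .porL hr⟩
theorem Mov.porR {k X Y A} (h : Mov k X Y) : Mov k (.por A X) (.por A Y) := by
  obtain ⟨G, G', hs, hr⟩ := h; exact ⟨G, G', hs, .porR hr⟩
theorem Mov.sandHead {k X Y B} (h : Mov k X Y) :
    Mov k (.sand false X B) (.sand false Y B) := by
  obtain ⟨G, G', hs, hr⟩ := h; exact ⟨G, G', hs, .sandHead hr⟩
theorem Mov.sandTail {k X Y A} (h : Mov k X Y) :
    Mov k (.sand true A X) (.sand true A Y) := by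
  obtain ⟨G, G', hs, hr⟩ := h; exact ⟨G, G', hs, .sandTail hr⟩
theorem Mov.sorHead {k X Y B} (h : Mov k X Y) :
    Mov k (.sor false X B) (.sor false Y B) := by
  obtain ⟨G, G', hs, hr⟩ := h; exact ⟨G, G', hs, .sorHead hr⟩
theorem Mov.sorTail {k X Y A} (h : Mov k X Y) :
    Mov k (.sor true A X) (.sor true A Y) := by
  obtain ⟨G, G', hs, hr⟩ := h; exact ⟨G, G', hs, .sorTail hr⟩

/-- Commutation of two moves of different root kinds from a common position. -/
theorem moveComm {k1 k2 : MKind} (hk : kTag k1 ≠ kTag k2) {G1 G1' G2 G2' : HFml}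
    (s1 : Shape k1 G1 G1') (s2 : Shape k2 G2 G2') {F H1 : HFml}
    (t : HRepl G1 G1' F H1) : ∀ {H2}, HRepl G2 G2' F H2 → Tri k1 k2 H1 H2 := by
  induction t with
  | here =>
    intro H2 b
    cases k1
    case sa =>
      obtain ⟨A, B, rfl, rfl⟩ := s1
      cases b with
      | here =>
        have h2t := s2.tag
        cases k2 <;> simp_all [hTag, kTag]
      | @sandHead _ A₂ _ b' =>
        exact Or.inr (Or.inl ⟨_, ⟨_, _, ⟨A₂, B, rfl, rfl⟩, .here⟩,
          .sandT A A₂ (HEqv.refl B)⟩)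
    case so =>
      obtain ⟨A, B, rfl, rfl⟩ := s1
      cases b with
      | here =>
        have h2t := s2.tag
        cases k2 <;> simp_all [hTag, kTag]
      | @sorHead _ A₂ _ b' =>
        exact Or.inr (Or.inl ⟨_, ⟨_, _, ⟨A₂, B, rfl, rfl⟩, .here⟩,
          .sorT A A₂ (HEqv.refl B)⟩)
    all_goals
      obtain ⟨A, B, h1, h2⟩ := s1
      subst h1
      cases b with
      | here =>
        have h2t := s2.tag
        cases k2 <;> simp_all [hTag, kTag]
  | @pandL A A₁ B t' ih =>
    intro H2 b
    cases b with
    | here =>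
      have h2t := s2.tag
      cases k2 <;> simp_all [hTag, kTag]
    | pandL b' =>
      exact (ih b').lift (fun X => .pand X B) (fun _ _ _ h => h.pandL)
        (fun _ _ h => .pand h (HEqv.refl B))
    | @pandR _ _ B₂ b' =>
      exact Or.inl ⟨.pand A₁ B₂, .pand A₁ B₂,
        ⟨_, _, s2, .pandR b'⟩, ⟨_, _, s1, .pandL t'⟩, HEqv.refl _⟩
  | @pandR A B B₁ t' ih =>
    intro H2 b
    cases b with
    | here =>
      have h2t := s2.tag
      cases k2 <;> simp_all [hTag, kTag]
    | pandR b' =>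
      exact (ih b').lift (fun X => .pand A X) (fun _ _ _ h => h.pandR)
        (fun _ _ h => .pand (HEqv.refl A) h)
    | @pandL _ A₂ _ b' =>
      exact Or.inl ⟨.pand A₂ B₁, .pand A₂ B₁,
        ⟨_, _, s2, .pandL b'⟩, ⟨_, _, s1, .pandR t'⟩, HEqv.refl _⟩
  | @porL A A₁ B t' ih =>
    intro H2 b
    cases b with
    | here =>
      have h2t := s2.tag
      cases k2 <;> simp_all [hTag, kTag]
    | porL b' =>
      exact (ih b').lift (fun X => .por X B) (fun _ _ _ h => h.porL)
        (fun _ _ h => .por h (HEqv.refl B))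
    | @porR _ _ B₂ b' =>
      exact Or.inl ⟨.por A₁ B₂, .por A₁ B₂,
        ⟨_, _, s2, .porR b'⟩, ⟨_, _, s1, .porL t'⟩, HEqv.refl _⟩
  | @porR A B B₁ t' ih =>
    intro H2 b
    cases b with
    | here =>
      have h2t := s2.tag
      cases k2 <;> simp_all [hTag, kTag]
    | porR b' =>
      exact (ih b').lift (fun X => .por A X) (fun _ _ _ h => h.porR)
        (fun _ _ h => .por (HEqv.refl A) h)
    | @porL _ A₂ _ b' =>
      exact Or.inl ⟨.por A₂ B₁, .por A₂ B₁,
        ⟨_, _, s2, .porL b'⟩, ⟨_, _, s1, .porR t'⟩, HEqv.refl _⟩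
  | @sandHead A A₁ B t' ih =>
    intro H2 b
    cases b with
    | here =>
      cases k2
      case sa =>
        obtain ⟨A₀, B₀, h1, rfl⟩ := s2
        injection h1 with hu hA hB
        subst hA; subst hB
        exact Or.inr (Or.inr ⟨_,
          ⟨_, _, ⟨A₁, B, rfl, rfl⟩, .here⟩, .sandT _ _ (HEqv.refl B)⟩)
      all_goals
        obtain ⟨A₀, B₀, h1, h2⟩ := s2
        exact absurd h1 (by simp)
    | sandHead b' =>
      exact (ih b').lift (fun X => .sand false X B) (fun _ _ _ h => h.sandHead)
        (fun _ _ h => .sandF h (HEqv.refl B))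
  | @sandTail A B B₁ t' ih =>
    intro H2 b
    cases b with
    | here =>
      have h2t := s2.tag
      cases k2 <;> simp_all [hTag, kTag]
    | sandTail b' =>
      exact (ih b').lift (fun X => .sand true A X) (fun _ _ _ h => h.sandTail)
        (fun _ _ h => .sandT A A h)
  | @sorHead A A₁ B t' ih =>
    intro H2 b
    cases b with
    | here =>
      cases k2
      case so =>
        obtain ⟨A₀, B₀, h1, rfl⟩ := s2
        injection h1 with hu hA hB
        subst hA; subst hB
        exact Or.inr (Or.inr ⟨_,
          ⟨_, _, ⟨A₁, B, rfl, rfl⟩, .here⟩, .sorT _ _ (HEqv.refl B)⟩)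
      all_goals
        obtain ⟨A₀, B₀, h1, h2⟩ := s2
        exact absurd h1 (by simp)
    | sorHead b' =>
      exact (ih b').lift (fun X => .sor false X B) (fun _ _ _ h => h.sorHead)
        (fun _ _ h => .sorF h (HEqv.refl B))
  | @sorTail A B B₁ t' ih =>
    intro H2 b
    cases b with
    | here =>
      have h2t := s2.tag
      cases k2 <;> simp_all [hTag, kTag]
    | sorTail b' =>
      exact (ih b').lift (fun X => .sor true A X) (fun _ _ _ h => h.sorTail)
        (fun _ _ h => .sorT A A h)

/-- CL10° provability is preserved by environment (bottom) moves. -/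
theorem CL10h.closed_bot {F : HFml} (h : CL10h F) :
    ∀ k, (k = MKind.c1 ∨ k = MKind.c2 ∨ k = MKind.sa) →
    ∀ {H2}, Mov k F H2 → CL10h H2 := by
  induction h with
  | wait F hst hc1 hc2 hsa ih1 ih2 ih3 =>
    rintro k (rfl | rfl | rfl) H2 ⟨G, G', ⟨A, B, rfl, rfl⟩, hr⟩
    · exact hc1 _ _ H2 hr
    · exact hc2 _ _ H2 hr
    · exact hsa _ _ H2 hr
  | choose A B h hp ih =>
    intro k hk H2 hm
    obtain ⟨G2, G2', hs2, b⟩ := hm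
    have hktag : kTag k = 0 ∨ kTag k = 2 := by
      rcases hk with rfl | rfl | rfl <;> simp [kTag]
    rcases h with hr | hr
    · have htri := moveComm (k1 := .d1)
        (by rcases hktag with h' | h' <;> rw [h'] <;> decide)
        ⟨A, B, rfl, rfl⟩ hs2 hr b
      rcases htri with ⟨K, K', m2, m1, e⟩ | ⟨K', m1, e⟩ | ⟨K, m2, e⟩
      · exact CL10h.of_mov_d1 m1 ((ih k hk m2).eqv e)
      · exact CL10h.of_mov_d1 m1 (hp.eqv e)
      · exact (ih k hk m2).eqv e.symm
    · have htri := moveComm (k1 := .d2)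
        (by rcases hktag with h' | h' <;> rw [h'] <;> decide)
        ⟨A, B, rfl, rfl⟩ hs2 hr b
      rcases htri with ⟨K, K', m2, m1, e⟩ | ⟨K', m1, e⟩ | ⟨K, m2, e⟩
      · exact CL10h.of_mov_d2 m1 ((ih k hk m2).eqv e)
      · exact CL10h.of_mov_d2 m1 (hp.eqv e)
      · exact (ih k hk m2).eqv e.symm
  | switch A B h hp ih =>
    intro k hk H2 hm
    obtain ⟨G2, G2', hs2, b⟩ := hm
    have hktag : kTag k = 0 ∨ kTag k = 2 := by
      rcases hk with rfl | rfl | rfl <;> simp [kTag]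
    have htri := moveComm (k1 := .so)
      (by rcases hktag with h' | h' <;> rw [h'] <;> decide)
      ⟨A, B, rfl, rfl⟩ hs2 h b
    rcases htri with ⟨K, K', m2, m1, e⟩ | ⟨K', m1, e⟩ | ⟨K, m2, e⟩
    · exact CL10h.of_mov_so m1 ((ih k hk m2).eqv e)
    · exact CL10h.of_mov_so m1 (hp.eqv e)
    · exact (ih k hk m2).eqv e.symm

/-- At most one of the two systems proves a formula. -/
theorem cl10_not_both : ∀ n F, hmu F < n → CL10h F → CL10hbar F → False := by
  intro n
  induction n with
  | zero => intro F h; omega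
  | succ n ih =>
    intro F hmuF h1 h2
    cases h2 with
    | wait _ hst hd1 hd2 hso =>
      cases h1 with
      | wait _ hst' _ _ _ => exact hst hst'
      | @choose _ H1 A B h hp =>
        rcases h with hr | hr
        · have hlt : hmu H1 < n := by
            have := Mov.mu_lt (k := .d1) ⟨_, _, ⟨A, B, rfl, rfl⟩, hr⟩; omega
          exact ih H1 hlt hp (hd1 A B H1 hr)
        · have hlt : hmu H1 < n := by
            have := Mov.mu_lt (k := .d2) ⟨_, _, ⟨A, B, rfl, rfl⟩, hr⟩; omega
          exact ih H1 hlt hp (hd2 A B H1 hr)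
      | @switch _ H1 A B h hp =>
        have hlt : hmu H1 < n := by
          have := Mov.mu_lt (k := .so) ⟨_, _, ⟨A, B, rfl, rfl⟩, h⟩; omega
        exact ih H1 hlt hp (hso A B H1 h)
    | @choose _ H2 A B h hp =>
      rcases h with hr | hr
      · have hm : Mov .c1 F H2 := ⟨_, _, ⟨A, B, rfl, rfl⟩, hr⟩
        have hlt := hm.mu_lt
        exact ih H2 (by omega) (h1.closed_bot .c1 (Or.inl rfl) hm) hp
      · have hm : Mov .c2 F H2 := ⟨_, _, ⟨A, B, rfl, rfl⟩, hr⟩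
        have hlt := hm.mu_lt
        exact ih H2 (by omega) (h1.closed_bot .c2 (Or.inr (Or.inl rfl)) hm) hp
    | @switch _ H2 A B h hp =>
      have hm : Mov .sa F H2 := ⟨_, _, ⟨A, B, rfl, rfl⟩, h⟩
      have hlt := hm.mu_lt
      exact ih H2 (by omega) (h1.closed_bot .sa (Or.inr (Or.inr rfl)) hm) hp

/-- At least one of the two systems proves each formula. -/
theorem cl10_at_least_one : ∀ n F, hmu F < n → CL10h F ∨ CL10hbar F := by
  intro n
  induction n with
  | zero => intro F h; omega
  | succ n ih =>
    intro F hmuF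
    by_cases hst : HFml.Stable F
    · by_cases hall : ∀ H, (Mov .c1 F H ∨ Mov .c2 F H ∨ Mov .sa F H) → CL10h H
      · refine Or.inl (CL10h.wait F hst ?_ ?_ ?_)
        · intro A B H hr; exact hall H (Or.inl ⟨_, _, ⟨A, B, rfl, rfl⟩, hr⟩)
        · intro A B H hr; exact hall H (Or.inr (Or.inl ⟨_, _, ⟨A, B, rfl, rfl⟩, hr⟩))
        · intro A B H hr; exact hall H (Or.inr (Or.inr ⟨_, _, ⟨A, B, rfl, rfl⟩, hr⟩))
      · push_neg at hall
        obtain ⟨H, hm, hnp⟩ := hall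
        have hlt : hmu H < n := by
          rcases hm with hm | hm | hm <;> (have := hm.mu_lt; omega)
        have hbar : CL10hbar H := (ih H hlt).resolve_left hnp
        rcases hm with hm | hm | hm
        · exact Or.inr (CL10hbar.of_mov_c1 hm hbar)
        · exact Or.inr (CL10hbar.of_mov_c2 hm hbar)
        · exact Or.inr (CL10hbar.of_mov_sa hm hbar)
    · by_cases hall : ∀ H, (Mov .d1 F H ∨ Mov .d2 F H ∨ Mov .so F H) → CL10hbar H
      · refine Or.inr (CL10hbar.wait F hst ?_ ?_ ?_)
        · intro A B H hr; exact hall H (Or.inl ⟨_, _, ⟨A, B, rfl, rfl⟩, hr⟩)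
        · intro A B H hr; exact hall H (Or.inr (Or.inl ⟨_, _, ⟨A, B, rfl, rfl⟩, hr⟩))
        · intro A B H hr; exact hall H (Or.inr (Or.inr ⟨_, _, ⟨A, B, rfl, rfl⟩, hr⟩))
      · push_neg at hall
        obtain ⟨H, hm, hnp⟩ := hall
        have hlt : hmu H < n := by
          rcases hm with hm | hm | hm <;> (have := hm.mu_lt; omega)
        have hh : CL10h H := (ih H hlt).resolve_right hnp
        rcases hm with hm | hm | hm
        · exact Or.inl (CL10h.of_mov_d1 hm hh)
        · exact Or.inl (CL10h.of_mov_d2 hm hh)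
        · exact Or.inl (CL10h.of_mov_so hm hh)
/-- Every CL10°-formula is provable in exactly one of CL10°
and its dual CL10°-bar. -/
theorem stmt14 (F : HFml) :
    (CL10h F ∧ ¬ CL10hbar F) ∨ (CL10hbar F ∧ ¬ CL10h F) := by
  rcases cl10_at_least_one (hmu F + 1) F (by omega) with h | h
  · exact Or.inl ⟨h, fun hb => cl10_not_both (hmu F + 1) F (by omega) h hb⟩
  · exact Or.inr ⟨h, fun hh => cl10_not_both (hmu F + 1) F (by omega) hh h⟩
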